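/- The moments of the adjacency operator v₁ of the graph ᵂA^{ρ₁}_∞(G₂) satisfy φ(v₁ᵐ) = Σ multinomial(k₁, k₂, k₃, k₁−k₂+k₃, k₅, k₁−k₂+k₅, m−3k₁+k₂−2k₃−2k₅), where the sum is over all integers k₁,k₂,k₃,k₅ ≥ 0 with 0 ≤ k₁−k₂+k₃, 0 ≤ k₁−k₂+k₅, and 3k₁−k₂+2k₃+2k₅ ≤ m, and multinomial(a₁,…,a_j) = (a₁+⋯+a_j)!/(a₁!⋯a_j!). -/

import Mathlib

open scoped ENNReal

noncomputable section

abbrev H2 : Type := lp (fun _ : ℤ × ℤ => ℂ) 2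

lemma memℓp_comp_equiv (f : H2) (e : (ℤ × ℤ) ≃ (ℤ × ℤ)) :
    Memℓp (fun i => (f : (ℤ × ℤ) → ℂ) (e i)) 2 := by
  apply memℓp_gen
  have hs : Summable fun i => ‖(f : (ℤ × ℤ) → ℂ) i‖ ^ (2 : ℝ≥0∞).toReal :=
    (memℓp_gen_iff (by norm_num)).1 (lp.memℓp f)
  exact (Equiv.summable_iff e).2 hs

/-- The unitary on `ℓ²(ℤ×ℤ)` induced by a permutation `e` of the index set,
sending `f` to `i ↦ f (e.symm i)`. -/
def lpShift (e : (ℤ × ℤ) ≃ (ℤ × ℤ)) : H2 ≃ₗᵢ[ℂ] H2 where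
  toLinearEquiv :=
    { toFun := fun f => ⟨fun i => f (e.symm i), memℓp_comp_equiv f e.symm⟩
      invFun := fun f => ⟨fun i => f (e i), memℓp_comp_equiv f e⟩
      map_add' := fun f g => by
        apply Subtype.ext
        funext i
        simp only [lp.coeFn_add]
        rfl
      map_smul' := fun c f => by
        apply Subtype.ext
        funext i
        simp only [lp.coeFn_smul, RingHom.id_apply]
        rfl
      left_inv := fun f => by
        apply Subtype.ext
        funext i
        simp
      right_inv := fun f => by
        apply Subtype.ext
        funext i
        simp }
  norm_map' := fun f => by
    have h2 : 0 < (2 : ℝ≥0∞).toReal := by norm_num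
    show ‖(⟨fun i => f (e.symm i), memℓp_comp_equiv f e.symm⟩ : H2)‖ = ‖f‖
    rw [lp.norm_eq_tsum_rpow h2 (⟨fun i => f (e.symm i), memℓp_comp_equiv f e.symm⟩ : H2),
      lp.norm_eq_tsum_rpow h2 f]
    congr 1
    exact Equiv.tsum_eq e.symm
      (fun i => ‖(f : (ℤ × ℤ) → ℂ) i‖ ^ (2 : ℝ≥0∞).toReal)

/-- `s ⊗ 1` : shift in the first variable. -/
def S1 : H2 →L[ℂ] H2 :=
  ((lpShift ((Equiv.addRight (1 : ℤ)).prodCongr (Equiv.refl ℤ))).toLinearIsometry).toContinuousLinearMap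

/-- `1 ⊗ s` : shift in the second variable. -/
def S2 : H2 →L[ℂ] H2 :=
  ((lpShift ((Equiv.refl ℤ).prodCongr (Equiv.addRight (1 : ℤ)))).toLinearIsometry).toContinuousLinearMap

/-- adjoint, i.e. `s* ⊗ 1`. -/
def S1s : H2 →L[ℂ] H2 := ContinuousLinearMap.adjoint S1

def S2s : H2 →L[ℂ] H2 := ContinuousLinearMap.adjoint S2

/-- the adjacency operator of the representation graph of `ρ₁|T²`. -/
def v1 : H2 →L[ℂ] H2 := 1 + S1 + S1s + S2 + S2s + S1 * S2s + S1s * S2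

/-- the adjacency operator of the representation graph of `ρ₂|T²`. -/
def v2 : H2 →L[ℂ] H2 :=
  v1 + 1 + S1 * S2 + S1s * S2s + S1 ^ 2 * S2s + S1s ^ 2 * S2 + S1 * S2s ^ 2 + S1s * S2 ^ 2

/-- The vacuum vector `Ω ⊗ Ω = δ_{(0,0)}`. -/
def Om : H2 := lp.single 2 ((0, 0) : ℤ × ℤ) (1 : ℂ)

/-! The finitely supported vectors of `ℓ²(ℤ²)` form a copy of the group algebra `ℂ[ℤ²]`, on which
the shifts act by multiplication with the monomials `single a 1`. Hence `v₁ᵐ Ω` is the `m`-th power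
of the sum `w` of the seven monomials of the steps, and `φ(v₁ᵐ)` is the constant coefficient of
`wᵐ`. By the multinomial theorem this coefficient is the sum of `multinomial k` over the step counts
`k ∈ ℕ⁷` with `|k| = m` and zero total displacement; the two balance equations and `|k| = m`
express `k₄, k₆, k₇` through `k₁, k₂, k₃, k₅`. -/

open AddMonoidAlgebra Finset

theorem memℓp_finsupp {ι E : Type*} [NormedAddCommGroup E] (f : ι →₀ E) (p : ℝ≥0∞) :
    Memℓp (⇑f) p :=
  (memℓp_zero f.hasFiniteSupport).of_exponent_ge zero_le

def toH2 : AddMonoidAlgebra ℂ (ℤ × ℤ) →ₗ[ℂ] H2 where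
  toFun f := ⟨⇑f.coeff, memℓp_finsupp f.coeff 2⟩
  map_add' f g := by ext; rfl
  map_smul' c f := by ext; simp

theorem toH2_apply (f : AddMonoidAlgebra ℂ (ℤ × ℤ)) (i : ℤ × ℤ) : toH2 f i = f.coeff i := rfl

theorem lpShift_apply (e : (ℤ × ℤ) ≃ (ℤ × ℤ)) (f : H2) (i : ℤ × ℤ) : lpShift e f i = f (e.symm i) :=
  rfl

theorem adjoint_lpShift (e : (ℤ × ℤ) ≃ (ℤ × ℤ)) :
    ContinuousLinearMap.adjoint (lpShift e).toLinearIsometry.toContinuousLinearMap =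
      (lpShift e.symm).toLinearIsometry.toContinuousLinearMap := by
  refine ((ContinuousLinearMap.eq_adjoint_iff _ _).2 fun x y => ?_).symm
  rw [lp.inner_eq_tsum, lp.inner_eq_tsum]
  simpa [lpShift_apply] using e.tsum_eq fun i => inner ℂ (x i) (y (e.symm i))

theorem lpShift_toH2 {e : (ℤ × ℤ) ≃ (ℤ × ℤ)} {a : ℤ × ℤ} (he : ∀ x, e x = x + a)
    (f : AddMonoidAlgebra ℂ (ℤ × ℤ)) : lpShift e (toH2 f) = toH2 (single a 1 * f) := by
  ext i
  rw [lpShift_apply, toH2_apply, toH2_apply, coeff_single_mul_apply, one_mul,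
    e.symm_apply_eq.2 (by rw [he, sub_add_cancel]), neg_add_eq_sub]

theorem lpShift_symm_toH2 {e : (ℤ × ℤ) ≃ (ℤ × ℤ)} {a : ℤ × ℤ} (he : ∀ x, e x = x + a)
    (f : AddMonoidAlgebra ℂ (ℤ × ℤ)) : lpShift e.symm (toH2 f) = toH2 (single (-a) 1 * f) :=
  lpShift_toH2 (fun x => e.symm_apply_eq.2 (by rw [he, neg_add_cancel_right])) f

theorem S1_toH2 (f : AddMonoidAlgebra ℂ (ℤ × ℤ)) : S1 (toH2 f) = toH2 (single (1, 0) 1 * f) :=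
  lpShift_toH2 (by simp) f

theorem S2_toH2 (f : AddMonoidAlgebra ℂ (ℤ × ℤ)) : S2 (toH2 f) = toH2 (single (0, 1) 1 * f) :=
  lpShift_toH2 (by simp) f

theorem S1s_toH2 (f : AddMonoidAlgebra ℂ (ℤ × ℤ)) : S1s (toH2 f) = toH2 (single (-1, 0) 1 * f) := by
  rw [S1s, S1, adjoint_lpShift]
  exact lpShift_symm_toH2 (a := (1, 0)) (by simp) f

theorem S2s_toH2 (f : AddMonoidAlgebra ℂ (ℤ × ℤ)) : S2s (toH2 f) = toH2 (single (0, -1) 1 * f) := by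
  rw [S2s, S2, adjoint_lpShift]
  exact lpShift_symm_toH2 (a := (0, 1)) (by simp) f

-- Ordered so that `k j` counts the steps `g2Step j` in the multinomial of the theorem.
def g2Step : Fin 7 → ℤ × ℤ := ![(1, -1), (-1, 1), (1, 0), (-1, 0), (0, -1), (0, 1), (0, 0)]

def g2Walk : AddMonoidAlgebra ℂ (ℤ × ℤ) := ∑ j, single (g2Step j) 1

theorem v1_toH2 (f : AddMonoidAlgebra ℂ (ℤ × ℤ)) : v1 (toH2 f) = toH2 (g2Walk * f) := by
  have hw : g2Walk = 1 + single (1, 0) 1 + single (-1, 0) 1 + single (0, 1) 1 + single (0, -1) 1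
      + single (1, 0) 1 * single (0, -1) 1 + single (-1, 0) 1 * single (0, 1) 1 := by
    simp only [g2Walk, g2Step, Fin.sum_univ_seven, single_mul_single, Prod.mk_add_mk, add_zero,
      zero_add, mul_one, one_def, Matrix.cons_val, Prod.mk_zero_zero]
    abel
  simp only [hw, v1, add_apply, mul_apply_eq_comp, one_apply_eq_self, S1_toH2, S2_toH2, S1s_toH2,
    S2s_toH2, add_mul, one_mul, mul_assoc, map_add]

theorem toH2_one : toH2 1 = Om := by
  ext i
  rw [toH2_apply, one_def, coeff_single, Om, lp.single_apply, Pi.single_apply, Finsupp.single_apply]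
  exact if_congr eq_comm rfl rfl

theorem v1_pow_Om (m : ℕ) : (v1 ^ m) Om = toH2 (g2Walk ^ m) := by
  induction m with
  | zero => simp [toH2_one]
  | succ m ih => rw [pow_succ', mul_apply_eq_comp, ih, v1_toH2, ← pow_succ']

theorem inner_toH2_Om (f : AddMonoidAlgebra ℂ (ℤ × ℤ)) :
    inner ℂ (toH2 f) Om = starRingEnd ℂ (f.coeff 0) := by
  simp [Om, lp.inner_single_right, toH2_apply, Prod.mk_zero_zero]

theorem coeff_sum_single_one_pow {ι G R : Type*} [Fintype ι] [DecidableEq ι] [AddCommMonoid G]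
    [DecidableEq G] [CommSemiring R] (d : ι → G) (m : ℕ) (g : G) :
    ((∑ j, single (d j) (1 : R)) ^ m).coeff g =
      ∑ k ∈ (piAntidiag univ m).filter (fun k => ∑ j, k j • d j = g),
        (Nat.multinomial univ k : R) := by
  simp only [sum_pow_eq_sum_piAntidiag, single_pow, one_pow, prod_single, prod_const_one,
    ← nsmul_eq_mul, coeff_sum, coeff_smul, Finsupp.finsetSum_apply, Finsupp.smul_apply,
    coeff_single, Finsupp.single_apply, sum_filter, smul_ite, nsmul_one, smul_zero]

theorem sum_nsmul_g2Step_eq_zero_iff (k : Fin 7 → ℕ) :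
    ∑ j, k j • g2Step j = 0 ↔ (k 0 + k 2 : ℤ) = k 1 + k 3 ∧ (k 1 + k 5 : ℤ) = k 0 + k 4 := by
  simp only [g2Step, Fin.sum_univ_seven, Matrix.cons_val, Prod.smul_mk, Prod.mk_add_mk,
    Prod.mk_eq_zero, smul_neg, smul_zero]
  simp only [nsmul_eq_mul, mul_one]
  omega

-- The truncated subtractions are exact on `g2Admissible m`.
def g2StepCounts (m : ℕ) : ℕ × ℕ × ℕ × ℕ → Fin 7 → ℕ
  | (k₁, k₂, k₃, k₅) =>
    ![k₁, k₂, k₃, k₁ + k₃ - k₂, k₅, k₁ + k₅ - k₂, m + k₂ - (3 * k₁ + 2 * k₃ + 2 * k₅)]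

theorem g2StepCounts_injective (m : ℕ) : Function.Injective (g2StepCounts m) := by
  rintro ⟨a₁, a₂, a₃, a₅⟩ ⟨b₁, b₂, b₃, b₅⟩ h
  have := fun j => congrFun h j
  simp_all [g2StepCounts]

def g2Admissible (m : ℕ) : Finset (ℕ × ℕ × ℕ × ℕ) :=
  (range (m + 1) ×ˢ range (2 * m + 1) ×ˢ range (m + 1) ×ˢ range (m + 1)).filter
    fun (k₁, k₂, k₃, k₅) => k₂ ≤ k₁ + k₃ ∧ k₂ ≤ k₁ + k₅ ∧ 3 * k₁ + 2 * k₃ + 2 * k₅ ≤ m + k₂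

theorem filter_closed_piAntidiag_eq_image (m : ℕ) :
    (piAntidiag univ m).filter (fun k => ∑ j, k j • g2Step j = 0) =
      (g2Admissible m).image (g2StepCounts m) := by
  ext k
  simp only [mem_filter, sum_nsmul_g2Step_eq_zero_iff]
  simp only [mem_piAntidiag, mem_univ, implies_true, and_true, mem_image,
    g2Admissible, mem_filter, mem_product, mem_range, Prod.exists, Fin.sum_univ_seven]
  constructor
  · rintro ⟨hsum, hx, hy⟩
    refine ⟨k 0, k 1, k 2, k 4, by omega, ?_⟩
    funext j
    fin_cases j <;> simp [g2StepCounts] <;> omega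
  · rintro ⟨k₁, k₂, k₃, k₅, ⟨-, h⟩, rfl⟩
    simp only [g2StepCounts, Matrix.cons_val]
    omega

theorem G2_torus_moment_multinomial (m : ℕ) :
    inner (𝕜 := ℂ) ((v1 ^ m) Om) Om =
      ((∑ k₁ ∈ Finset.range (m + 1), ∑ k₂ ∈ Finset.range (2 * m + 1),
          ∑ k₃ ∈ Finset.range (m + 1), ∑ k₅ ∈ Finset.range (m + 1),
          if k₂ ≤ k₁ + k₃ ∧ k₂ ≤ k₁ + k₅ ∧ 3 * k₁ + 2 * k₃ + 2 * k₅ ≤ m + k₂ then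
            Nat.multinomial Finset.univ
              ![k₁, k₂, k₃, k₁ + k₃ - k₂, k₅, k₁ + k₅ - k₂, m + k₂ - (3 * k₁ + 2 * k₃ + 2 * k₅)]
          else 0 : ℕ) : ℂ) := by
  rw [v1_pow_Om, inner_toH2_Om, g2Walk, coeff_sum_single_one_pow, ← Nat.cast_sum, map_natCast,
    filter_closed_piAntidiag_eq_image, sum_image (g2StepCounts_injective m).injOn, g2Admissible,
    sum_filter]
  simp only [sum_product]
  rfl

end
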